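/- arXiv:1206.3627 — 4 statements merged into one kernel-verified Lean document; each statement's English description precedes it below -/
import Mathlib

section
/- The function g(x) = (1/x)·log(1/(x·Γ(x))) is monotonically decreasing on (0, 1/2), and lim_{x→0⁺} g(x) = γ₀, where γ₀ = −Γ'(1) is the Euler–Mascheroni constant. -/
noncomputable def g (x : ℝ) : ℝ := (1 / x) * Real.log (1 / (x * Real.Gamma x))

/-!
Since `x Γ(x) = Γ(x + 1)` and `log Γ(1) = 0`, `g` is minus the slope of `L(x) = log Γ(x + 1)`
between `0` and `x`. Writing `L(x) = log Γ(x + 2) - log (x + 1)` exhibits `L` as a convex function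
(Bohr–Mollerup) plus a strictly convex one, so these slopes increase strictly with `x`, and they
tend to `L'(0) = Γ'(1)` as `x → 0⁺`.
-/

open Real Set Filter Topology

namespace Real

lemma log_Gamma_add_one_eq {x : ℝ} (hx : -1 < x) :
    log (Gamma (x + 1)) = log (Gamma (x + 2)) - log (x + 1) := by
  have hx1 : 0 < x + 1 := by linarith
  rw [show x + 2 = x + 1 + 1 by ring, Gamma_add_one hx1.ne',
    log_mul hx1.ne' (Gamma_pos_of_pos hx1).ne']
  ring

theorem strictConvexOn_log_Gamma_add_one :
    StrictConvexOn ℝ (Ioi (-1)) fun x => log (Gamma (x + 1)) := by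
  have hGamma : ConvexOn ℝ (Ioi (-1)) fun x => log (Gamma (x + 2)) := by
    refine (convexOn_log_Gamma.translate_left 2).subset (fun x hx => ?_) (convex_Ioi _)
    simp only [mem_preimage, mem_Ioi] at hx ⊢
    linarith
  have hlog : StrictConvexOn ℝ (Ioi (-1)) fun x => -log (x + 1) := by
    have hs : (fun z => 1 + z) ⁻¹' Ioi (0 : ℝ) = Ioi (-1) := by
      ext x
      simp only [mem_preimage, mem_Ioi]
      constructor <;> intro h <;> linarith
    rw [← hs]
    exact (strictConcaveOn_log_Ioi.translate_left 1).neg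
  refine (hGamma.add_strictConvexOn hlog).congr fun x hx => ?_
  simp only [Pi.add_apply, log_Gamma_add_one_eq hx, sub_eq_add_neg]

theorem hasDerivAt_log_Gamma_add_one_zero :
    HasDerivAt (fun x => log (Gamma (x + 1))) (deriv Gamma 1) 0 := by
  have hGamma : HasDerivAt Gamma (deriv Gamma 1) (0 + 1) := by
    rw [zero_add]
    refine (differentiableAt_Gamma fun m h => ?_).hasDerivAt
    linarith [(Nat.cast_nonneg m : (0 : ℝ) ≤ m)]
  simpa [Gamma_one] using
    (hGamma.comp 0 ((hasDerivAt_id 0).add_const 1)).log (by simp [Gamma_one])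

end Real

lemma g_eq_neg_slope (x : ℝ) : g x = -slope (fun x => log (Gamma (x + 1))) 0 x := by
  rcases eq_or_ne x 0 with rfl | hx
  · simp [g]
  rw [slope_def_field, g, Gamma_add_one hx, one_div (x * Gamma x), log_inv, zero_add, Gamma_one,
    log_one]
  ring

theorem strictAntiOn_g : StrictAntiOn g (Ioi 0) := by
  intro x (hx : 0 < x) y (hy : 0 < y) hxy
  have hsec := strictConvexOn_log_Gamma_add_one.secant_strict_mono (a := 0)
    (by norm_num) (mem_Ioi.2 (by linarith)) (mem_Ioi.2 (by linarith)) hx.ne' hy.ne' hxy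
  simpa [g_eq_neg_slope, slope_def_field] using hsec

theorem tendsto_g_nhdsGT_zero : Tendsto g (𝓝[>] 0) (𝓝 (-deriv Gamma 1)) := by
  have hslope := hasDerivAt_log_Gamma_add_one_zero.tendsto_slope.mono_left
    (nhdsGT_le_nhdsNE 0)
  simpa only [funext g_eq_neg_slope] using hslope.neg

/-- `g(x) = (1/x) log(1/(x Γ(x)))` is monotonically decreasing on `(0, 1/2)` and
`g(x) → γ₀ = −Γ'(1)` as `x → 0⁺`. -/
theorem stmt_4 :
    StrictAntiOn g (Set.Ioo (0 : ℝ) (1 / 2)) ∧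
      Filter.Tendsto g (nhdsWithin 0 (Set.Ioi 0)) (nhds (-(deriv Real.Gamma 1))) :=
  ⟨strictAntiOn_g.mono Ioo_subset_Ioi_self, tendsto_g_nhdsGT_zero⟩
end

section
/- Let η ∈ ℝ^s be a random vector with independent components η_j following Laplace (double-exponential) distributions with scale parameters ψ_j, where ψ_j ∈ [a, b] for all j with 0 < a ≤ b. Then for any δ > 0 and any fixed η₀ ∈ ℝ^s, P(‖η − η₀‖₂ < δ) ≥ exp(−s·log 2 − Σ_{j=1}^s |η₀ⱼ|/a) · (1 − e^{−δ/(b√s)})^s. -/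
/-!
The box of half-width `c = δ / √s` around `η₀` lies in the Euclidean ball of radius `δ`, and
by independence its probability is the product of the one-dimensional masses
`DE(ψⱼ)((η₀ⱼ - c, η₀ⱼ + c))`. Since `|x| ≤ |t| + |x - t|`, the `DE(ψ)` density at `x` is at least
`e^{-|t|/ψ}` times the density at `x - t`, so the interval `(t, t + c)` has mass at least
`e^{-|t|/ψ}` times that of `(0, c)`, which is `(1 - e^{-c/ψ}) / 2`. Both factors are monotone in
`ψ ∈ [a, b]`.
-/

open MeasureTheory
open scoped BigOperators

/-- The Laplace (double-exponential) distribution `DE(ψ)` with scale `ψ`,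
having density `x ↦ (1/(2ψ)) e^{−|x|/ψ}` with respect to Lebesgue measure. -/
noncomputable def laplace (ψ : ℝ) : Measure ℝ :=
  volume.withDensity fun x => ENNReal.ofReal ((1 / (2 * ψ)) * Real.exp (-|x| / ψ))

open Real Set

instance (ψ : ℝ) : SigmaFinite (laplace ψ) := by
  unfold laplace; infer_instance

lemma laplace_Ioo_zero {ψ : ℝ} (hψ : 0 < ψ) {c : ℝ} (hc : 0 ≤ c) :
    laplace ψ (Ioo 0 c) = ENNReal.ofReal (1 / 2 * (1 - exp (-c / ψ))) := by
  have hderiv (x : ℝ) :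
      HasDerivAt (fun y => -(1 / 2) * exp (-y / ψ)) (1 / (2 * ψ) * exp (-x / ψ)) x :=
    (((hasDerivAt_neg x).div_const ψ).exp.const_mul _).congr_deriv (by field_simp)
  have hcont : Continuous fun x => 1 / (2 * ψ) * exp (-x / ψ) := by fun_prop
  rw [laplace, withDensity_apply _ measurableSet_Ioo,
    setLIntegral_congr_fun measurableSet_Ioo fun x hx => by rw [abs_of_pos hx.1],
    ← ofReal_integral_eq_lintegral_ofReal (hcont.integrableOn_Icc.mono_set Ioo_subset_Icc_self)
      (.of_forall fun x => by positivity),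
    ← integral_Ioc_eq_integral_Ioo, ← intervalIntegral.integral_of_le hc,
    intervalIntegral.integral_eq_sub_of_hasDerivAt (fun x _ => hderiv x)
      (hcont.intervalIntegrable _ _)]
  congr 1
  simp only [neg_zero, zero_div, exp_zero]
  ring

lemma ofReal_exp_mul_laplace_le_laplace_preimage_sub {ψ : ℝ} (hψ : 0 < ψ) (t : ℝ) {S : Set ℝ}
    (hS : MeasurableSet S) :
    ENNReal.ofReal (exp (-|t| / ψ)) * laplace ψ S ≤ laplace ψ ((· - t) ⁻¹' S) := by
  set g : ℝ → ENNReal := fun x => ENNReal.ofReal (1 / (2 * ψ) * exp (-|x| / ψ))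
  have hg : Measurable g := by fun_prop
  have hshift (x : ℝ) : ENNReal.ofReal (exp (-|t| / ψ)) * g (x - t) ≤ g x := by
    rw [← ENNReal.ofReal_mul (exp_pos _).le]
    apply ENNReal.ofReal_le_ofReal
    rw [mul_left_comm, ← exp_add]
    gcongr
    have := abs_sub_abs_le_abs_sub x t
    rw [← add_div, div_le_div_iff_of_pos_right hψ]
    linarith
  calc ENNReal.ofReal (exp (-|t| / ψ)) * laplace ψ S
      = ENNReal.ofReal (exp (-|t| / ψ)) * ∫⁻ x in (· - t) ⁻¹' S, g (x - t) := by
        rw [(measurePreserving_sub_right volume t).setLIntegral_comp_preimage hS hg, laplace,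
          withDensity_apply _ hS]
    _ = ∫⁻ x in (· - t) ⁻¹' S, ENNReal.ofReal (exp (-|t| / ψ)) * g (x - t) :=
        (lintegral_const_mul _ (hg.comp (measurable_sub_const t))).symm
    _ ≤ ∫⁻ x in (· - t) ⁻¹' S, g x := lintegral_mono hshift
    _ = laplace ψ ((· - t) ⁻¹' S) := by
        rw [laplace, withDensity_apply _ (hS.preimage (measurable_sub_const t))]

lemma one_sub_exp_neg_div_nonneg {c b : ℝ} (hc : 0 ≤ c) (hb : 0 ≤ b) : 0 ≤ 1 - exp (-c / b) :=
  sub_nonneg.2 (exp_le_one_iff.2 (by rw [neg_div]; exact neg_nonpos.2 (div_nonneg hc hb)))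

lemma laplace_ball_ge {ψ a b : ℝ} (ha : 0 < a) (hψ : ψ ∈ Icc a b) (t : ℝ) {c : ℝ} (hc : 0 ≤ c) :
    ENNReal.ofReal (1 / 2 * exp (-|t| / a) * (1 - exp (-c / b))) ≤
      laplace ψ (Metric.ball t c) := by
  have hψ0 : 0 < ψ := ha.trans_le hψ.1
  have hb : 0 < b := hψ0.trans_le hψ.2
  have hpreimage : (· - t) ⁻¹' Ioo 0 c ⊆ Metric.ball t c := fun x hx => by
    rw [Metric.mem_ball, Real.dist_eq, abs_of_pos hx.1]
    exact hx.2
  calc ENNReal.ofReal (1 / 2 * exp (-|t| / a) * (1 - exp (-c / b)))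
      ≤ ENNReal.ofReal (exp (-|t| / ψ)) * ENNReal.ofReal (1 / 2 * (1 - exp (-c / ψ))) := by
        rw [← ENNReal.ofReal_mul (exp_pos _).le]
        apply ENNReal.ofReal_le_ofReal
        have hexp_t : exp (-|t| / a) ≤ exp (-|t| / ψ) := by
          rw [neg_div, neg_div]
          gcongr
          exact hψ.1
        have hexp_c : exp (-c / ψ) ≤ exp (-c / b) := by
          rw [neg_div, neg_div]
          gcongr
          exact hψ.2
        have := mul_le_mul hexp_t (sub_le_sub_left hexp_c 1) (one_sub_exp_neg_div_nonneg hc hb.le)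
          (exp_pos _).le
        linarith
    _ = ENNReal.ofReal (exp (-|t| / ψ)) * laplace ψ (Ioo 0 c) := by rw [laplace_Ioo_zero hψ0 hc]
    _ ≤ laplace ψ ((· - t) ⁻¹' Ioo 0 c) :=
        ofReal_exp_mul_laplace_le_laplace_preimage_sub hψ0 t measurableSet_Ioo
    _ ≤ laplace ψ (Metric.ball t c) := measure_mono hpreimage

lemma sqrt_sum_sq_sub_lt_of_forall_abs_sub_lt {ι : Type*} [Fintype ι] {x y : ι → ℝ} {δ : ℝ}
    (hδ : 0 < δ) (h : ∀ j, |x j - y j| < δ / √(Fintype.card ι)) :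
    √(∑ j, (x j - y j) ^ 2) < δ := by
  rcases isEmpty_or_nonempty ι with hι | hι
  · simp [hδ]
  have hcard : (0 : ℝ) < Fintype.card ι := by exact_mod_cast Fintype.card_pos
  rw [sqrt_lt' hδ]
  calc ∑ j, (x j - y j) ^ 2 < ∑ _j : ι, (δ / √(Fintype.card ι)) ^ 2 :=
        Finset.sum_lt_sum_of_nonempty Finset.univ_nonempty fun j _ => by
          simpa only [sq_abs] using pow_lt_pow_left₀ (h j) (abs_nonneg _) two_ne_zero
    _ = δ ^ 2 := by
        rw [Finset.sum_const, Finset.card_univ, nsmul_eq_mul, div_pow, sq_sqrt hcard.le]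
        field_simp

/-- If `η ∈ ℝ^s` has independent components `η_j ∼ DE(ψ_j)` with `ψ_j ∈ [a, b]`,
`0 < a ≤ b`, then for any `δ > 0` and `η₀ ∈ ℝ^s`,
`P(‖η − η₀‖₂ < δ) ≥ exp(−s log 2 − Σ_j |η₀_j|/a) (1 − e^{−δ/(b√s)})^s`. -/
theorem stmt_5 (s : ℕ) (ψ : Fin s → ℝ) (a b : ℝ) (ha : 0 < a) (hab : a ≤ b)
    (hψ : ∀ j, ψ j ∈ Set.Icc a b) (δ : ℝ) (hδ : 0 < δ) (η₀ : Fin s → ℝ) :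
    ENNReal.ofReal
        (Real.exp (-(s : ℝ) * Real.log 2 - ∑ j, |η₀ j| / a) *
          (1 - Real.exp (-δ / (b * Real.sqrt s))) ^ s) ≤
      Measure.pi (fun j => laplace (ψ j))
        {η : Fin s → ℝ | Real.sqrt (∑ j, (η j - η₀ j) ^ 2) < δ} := by
  set c := δ / √s
  have hc : 0 ≤ c := by positivity
  have hmass_nonneg : 0 ≤ 1 - exp (-c / b) := one_sub_exp_neg_div_nonneg hc (ha.le.trans hab)
  have hbox : univ.pi (fun j => Metric.ball (η₀ j) c) ⊆
      {η : Fin s → ℝ | √(∑ j, (η j - η₀ j) ^ 2) < δ} := fun η hη =>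
    sqrt_sum_sq_sub_lt_of_forall_abs_sub_lt hδ fun j => by
      simpa [Real.dist_eq] using hη j (mem_univ j)
  have hexp_two : exp (-(s : ℝ) * log 2) = (1 / 2) ^ s := by
    rw [neg_mul, exp_neg, exp_nat_mul, exp_log two_pos, one_div, inv_pow]
  calc ENNReal.ofReal (exp (-(s : ℝ) * log 2 - ∑ j, |η₀ j| / a) * (1 - exp (-δ / (b * √s))) ^ s)
      = ∏ j, ENNReal.ofReal (1 / 2 * exp (-|η₀ j| / a) * (1 - exp (-c / b))) := by
        rw [← ENNReal.ofReal_prod_of_nonneg (fun j _ => by positivity)]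
        congr 1
        rw [Finset.prod_mul_distrib, Finset.prod_mul_distrib, Finset.prod_const, Finset.prod_const,
          Finset.card_fin, ← exp_sum, exp_sub, hexp_two, show -δ / (b * √s) = -c / b by ring]
        simp only [neg_div, Finset.sum_neg_distrib, exp_neg]
        rw [div_eq_mul_inv]
    _ ≤ ∏ j, laplace (ψ j) (Metric.ball (η₀ j) c) :=
        Finset.prod_le_prod' fun j _ => laplace_ball_ge ha (hψ j) (η₀ j) hc
    _ = Measure.pi (fun j => laplace (ψ j)) (univ.pi fun j => Metric.ball (η₀ j) c) :=
        (Measure.pi_pi _ _).symm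
    _ ≤ _ := measure_mono hbox
end

section
/- Let ε ∈ (0, 1/2) and set β = 8·log(1/ε). Then for all x ≥ ε, log x − (x − 1) + (β/2)(x − 1)² ≥ 0. Equivalently, log x − (x−1) ≥ −4·log(1/ε)·(x−1)² for all x ≥ ε. -/
/-- For `ε ∈ (0, 1/2)` and all `x ≥ ε`,
`log x − (x−1) ≥ −4 log(1/ε) (x−1)²`. -/
theorem stmt_15 (ε : ℝ) (hε : ε ∈ Set.Ioo (0 : ℝ) (1 / 2)) (x : ℝ) (hx : ε ≤ x) :
    -(4 * Real.log (1 / ε)) * (x - 1) ^ 2 ≤ Real.log x - (x - 1) := by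
  obtain ⟨hε0, hε2⟩ := hε
  have hx0 : 0 < x := lt_of_lt_of_le hε0 hx
  have hL2 : Real.log 2 < Real.log (1 / ε) := by
    apply Real.log_lt_log (by norm_num)
    rw [lt_div_iff₀ hε0]; linarith
  have hlog2 : (0.6931471803 : ℝ) < Real.log 2 := Real.log_two_gt_d9
  have hL : (1/2 : ℝ) < Real.log (1 / ε) := by linarith
  rcases le_or_gt x (1/2) with h | h
  · -- x ≤ 1/2
    have hlx : Real.log ε ≤ Real.log x := Real.log_le_log hε0 hx
    have hle : Real.log ε = -Real.log (1/ε) := by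
      rw [Real.log_div one_ne_zero (ne_of_gt hε0)]; simp
    have hsq : (1/4 : ℝ) ≤ (x - 1) ^ 2 := by nlinarith
    nlinarith [hL]
  · -- x > 1/2
    have h1 : 1 - 1/x ≤ Real.log x := by
      have := Real.log_le_sub_one_of_pos (show (0:ℝ) < 1/x by positivity)
      rw [Real.log_div one_ne_zero (ne_of_gt hx0)] at this
      simp [one_div] at this ⊢; linarith
    have hinv : (x - 1)^2 / x ≤ 2 * (x - 1)^2 := by
      rw [div_le_iff₀ hx0]; nlinarith [sq_nonneg (x-1)]
    have key : -((x - 1)^2 / x) ≤ Real.log x - (x - 1) := by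
      have : 1 - 1/x - (x - 1) = -((x-1)^2/x) := by field_simp; ring
      linarith [h1, this.ge]
    nlinarith [sq_nonneg (x-1)]
end

section
/- Let Σ₀, Σ be p×p positive definite matrices and let ψ₁,…,ψ_p > 0 be the eigenvalues of Σ^{−1/2} Σ₀ Σ^{−1/2}. Suppose ψ_j ≥ ε for all j, where ε ∈ (0, 1/2). Then log det(Σ₀Σ⁻¹) − tr(Σ₀Σ⁻¹ − I) ≥ −4·log(1/ε)·‖Σ^{−1/2} Σ₀ Σ^{−1/2} − I‖_F². -/
/-!
With `Q = Σ^{1/2}` and `M = Q⁻¹ Σ₀ Q⁻¹`, the matrix `Σ₀ Σ⁻¹ = Σ₀ Q⁻¹ Q⁻¹` has the same determinant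
and trace as `M`. Writing `M - I` and `(M - I)²` through the functional calculus of `M`, both sides
become sums over the eigenvalues `ψ_j` of `M`: the left side is `Σ (log ψ_j - (ψ_j - 1))` and
`‖M - I‖_F² = Σ (ψ_j - 1)²`, so the claim follows termwise from the scalar inequality.
-/

open Matrix
open scoped MatrixOrder

/-- Frobenius norm of a real square matrix: `√(tr (Aᵀ A))`. -/
noncomputable def frobNorm {p : ℕ} (A : Matrix (Fin p) (Fin p) ℝ) : ℝ :=
  Real.sqrt (Matrix.trace (Aᵀ * A))

namespace Real

lemma neg_four_log_inv_mul_sq_le_log_sub_sub_one {ε x : ℝ} (hε : 0 < ε) (hε2 : ε ≤ 1 / 2)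
    (hx : ε ≤ x) : -(4 * log (1 / ε)) * (x - 1) ^ 2 ≤ log x - (x - 1) := by
  have hx0 : 0 < x := hε.trans_le hx
  have hlog_half : 1 / 2 < log (1 / ε) := by
    linarith [log_two_gt_d9, log_le_log two_pos (show 2 ≤ 1 / ε by rw [le_div_iff₀ hε]; linarith)]
  rcases le_or_gt (1 / 2) x with hx2 | hx2
  · -- `log x ≥ 1 - 1/x`, so the left side is at least `-(x - 1)² / x ≥ -2 (x - 1)²`
    have hinv : 1 - 1 / x ≤ log x := by
      have := log_le_sub_one_of_pos (one_div_pos.mpr hx0)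
      rw [one_div, log_inv] at this
      rw [one_div]; linarith
    have hquad : x - 2 + 1 / x ≤ 2 * (x - 1) ^ 2 := by
      rw [show x - 2 + 1 / x = (x - 1) ^ 2 / x by field_simp; ring, div_le_iff₀ hx0]
      nlinarith [sq_nonneg (x - 1)]
    nlinarith [mul_le_mul_of_nonneg_right hlog_half.le (sq_nonneg (x - 1))]
  · -- `log x ≥ log ε = -log (1/ε)` and `(x - 1)² ≥ 1/4`
    have hlogx : -log (1 / ε) ≤ log x := by
      rw [one_div, log_inv, neg_neg]; exact log_le_log hε hx
    have hsq : 1 / 4 ≤ (x - 1) ^ 2 := by nlinarith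
    nlinarith [mul_le_mul_of_nonneg_left hsq (show 0 ≤ 4 * log (1 / ε) by linarith)]

end Real

namespace Matrix

section Similarity

variable {n R : Type*} [Fintype n] [DecidableEq n] [CommRing R] {B Q S : Matrix n n R}

lemma det_mul_inv_of_mul_self_eq (hQ : Q * Q = S) : (B * S⁻¹).det = (Q⁻¹ * B * Q⁻¹).det := by
  rw [← hQ, mul_inv_rev, det_mul, det_mul, det_mul, det_mul]; ring

lemma trace_mul_inv_of_mul_self_eq (hQ : Q * Q = S) :
    (B * S⁻¹).trace = (Q⁻¹ * B * Q⁻¹).trace := by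
  rw [← hQ, mul_inv_rev, ← Matrix.mul_assoc, trace_mul_cycle]

end Similarity

namespace IsHermitian

variable {n 𝕜 : Type*} [Fintype n] [DecidableEq n] [RCLike 𝕜] {A : Matrix n n 𝕜}

lemma trace_cfc (hA : A.IsHermitian) (f : ℝ → ℝ) :
    (cfc f A).trace = ∑ i, (f (hA.eigenvalues i) : 𝕜) := by
  rw [hA.cfc_eq, IsHermitian.cfc, Unitary.conjStarAlgAut_apply, trace_mul_cycle,
    Unitary.coe_star_mul_self, Matrix.one_mul, trace_diagonal]
  rfl

lemma sub_one_eq_cfc (hA : A.IsHermitian) : A - 1 = cfc (fun x : ℝ => x - 1) A := by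
  rw [cfc_sub (fun x : ℝ => x) (fun _ => 1), cfc_id' ℝ A, cfc_const_one ℝ A]

end IsHermitian

lemma IsHermitian.frobNorm_cfc_sq {p : ℕ} {A : Matrix (Fin p) (Fin p) ℝ} (hA : A.IsHermitian)
    (f : ℝ → ℝ) : frobNorm (cfc f A) ^ 2 = ∑ i, f (hA.eigenvalues i) ^ 2 := by
  have hcont : ContinuousOn f (spectrum ℝ A) := (finite_real_spectrum (A := A)).continuousOn f
  have hT : (cfc f A)ᵀ = cfc f A := by
    rw [← conjTranspose_eq_transpose_of_trivial]; exact (cfc_predicate f A).star_eq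
  rw [frobNorm, hT, ← cfc_mul f f A, hA.trace_cfc]
  simp only [RCLike.ofReal_real_eq_id, id, ← pow_two]
  exact Real.sq_sqrt (Finset.sum_nonneg fun i _ => sq_nonneg _)

lemma IsHermitian.log_det_sub_trace_sub_one {p : ℕ} {A : Matrix (Fin p) (Fin p) ℝ}
    (hA : A.IsHermitian) (hpos : ∀ i, 0 < hA.eigenvalues i) :
    Real.log A.det - (A - 1).trace =
      ∑ i, (Real.log (hA.eigenvalues i) - (hA.eigenvalues i - 1)) := by
  rw [hA.det_eq_prod_eigenvalues, hA.sub_one_eq_cfc, hA.trace_cfc, Finset.sum_sub_distrib]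
  simp only [RCLike.ofReal_real_eq_id, id]
  rw [Real.log_prod fun i _ => (hpos i).ne']

end Matrix

theorem stmt_17_general {p : ℕ} (S₀ S : Matrix (Fin p) (Fin p) ℝ)
    (h : S.PosDef) (ε : ℝ) (hε : ε ∈ Set.Ioo (0 : ℝ) (1 / 2))
    (hM : ((CFC.sqrt S)⁻¹ * S₀ * (CFC.sqrt S)⁻¹).IsHermitian)
    (heig : ∀ j, ε ≤ hM.eigenvalues j) :
    -(4 * Real.log (1 / ε)) *
        frobNorm ((CFC.sqrt S)⁻¹ * S₀ * (CFC.sqrt S)⁻¹ - 1) ^ 2 ≤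
      Real.log (Matrix.det (S₀ * S⁻¹)) - Matrix.trace (S₀ * S⁻¹ - 1) := by
  obtain ⟨hε0, hε2⟩ := hε
  have hS : CFC.sqrt S * CFC.sqrt S = S := CFC.sqrt_mul_sqrt_self S h.posSemidef.nonneg
  rw [trace_sub, trace_mul_inv_of_mul_self_eq hS, det_mul_inv_of_mul_self_eq hS, ← trace_sub,
    hM.log_det_sub_trace_sub_one fun i => hε0.trans_le (heig i), hM.sub_one_eq_cfc,
    hM.frobNorm_cfc_sq, Finset.mul_sum]
  exact Finset.sum_le_sum fun i _ =>
    Real.neg_four_log_inv_mul_sq_le_log_sub_sub_one hε0 hε2.le (heig i)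

/-- If all eigenvalues of `Σ^{−1/2} Σ₀ Σ^{−1/2}` are at least `ε ∈ (0, 1/2)`, then
`log det(Σ₀ Σ⁻¹) − tr(Σ₀ Σ⁻¹ − I) ≥ −4 log(1/ε) ‖Σ^{−1/2} Σ₀ Σ^{−1/2} − I‖_F²`. -/
theorem stmt_17 {p : ℕ} (S₀ S : Matrix (Fin p) (Fin p) ℝ)
    (h₀ : S₀.PosDef) (h : S.PosDef) (ε : ℝ) (hε : ε ∈ Set.Ioo (0 : ℝ) (1 / 2))
    (hM : ((CFC.sqrt S)⁻¹ * S₀ * (CFC.sqrt S)⁻¹).IsHermitian)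
    (heig : ∀ j, ε ≤ hM.eigenvalues j) :
    -(4 * Real.log (1 / ε)) *
        frobNorm ((CFC.sqrt S)⁻¹ * S₀ * (CFC.sqrt S)⁻¹ - 1) ^ 2 ≤
      Real.log (Matrix.det (S₀ * S⁻¹)) - Matrix.trace (S₀ * S⁻¹ - 1) :=
  stmt_17_general S₀ S h ε hε hM heig
end
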